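/- Let γ > 0 and let q, x ∈ ℂ^N with ‖q‖_A^* ≤ γ. Suppose x = Σ_{k=1}^K c_k a(f_k, φ_k) with c_k > 0, f_k ∈ [0,1), φ_k ∈ [0,2π), and Σ_{k=1}^K c_k = ‖x‖_A (the decomposition achieves the atomic norm). If ⟨q, x⟩_ℝ = γ‖x‖_A, then ⟨q, a(f_k, 0)⟩ = γ · e^{iφ_k} for every k = 1,…,K. -/

import Mathlib

/-!
Every atom `a(f,ψ)` with `f ∈ [0,1)` has atomic norm at most `1`, so
`Re⟨q, a(f,ψ)⟩ = Re(e^{-iψ} ⟨q, a(f,0)⟩) ≤ γ` for every phase `ψ`; taking `ψ = arg ⟨q, a(f,0)⟩`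
gives `|⟨q, a(f,0)⟩| ≤ γ`. Since `⟨q,x⟩_ℝ = Σ c_k Re⟨q, a(f_k,φ_k)⟩` equals `γ Σ c_k` with all
`c_k > 0`, every term attains `γ`, and a complex number of modulus `≤ γ` whose rotation by
`e^{-iφ_k}` has real part `γ` is `γ e^{iφ_k}`.

Because `‖q‖_A^*` is a real `sSup` (junk value `0` when unbounded), the hypothesis on it only
bites once the set is bounded above. That needs `‖x‖_∞ ≤ ‖x‖_A`, hence that every `x` has some
atomic decomposition (otherwise `‖x‖_A = sInf ∅ = 0`); this holds because the Vandermonde matrix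
of the `N`-th roots of unity is invertible.
-/

noncomputable section

/-- The atom `a(f,φ) ∈ ℂ^N` with entries `exp(i(2πf·t + φ))`, `t = 0,…,N-1`. -/
def atom (N : ℕ) (f φ : ℝ) : Fin N → ℂ :=
  fun t => Complex.exp (Complex.I * Complex.ofReal (2 * Real.pi * f * (t : ℕ) + φ))

/-- The atomic norm `‖x‖_A`. -/
def atomicNorm (N : ℕ) (x : Fin N → ℂ) : ℝ :=
  sInf { r : ℝ | ∃ (K : ℕ) (c : Fin K → ℝ) (f : Fin K → ℝ) (φ : Fin K → ℝ),
    (∀ k, 0 ≤ c k) ∧ (∀ k, f k ∈ Set.Ico (0 : ℝ) 1) ∧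
    (∀ k, φ k ∈ Set.Ico (0 : ℝ) (2 * Real.pi)) ∧
    (x = ∑ k, fun t => (c k : ℂ) * atom N (f k) (φ k) t) ∧ r = ∑ k, c k }

/-- `⟨q,x⟩ = Σ_t q_t · conj(x_t)`. -/
def cinner (N : ℕ) (q x : Fin N → ℂ) : ℂ :=
  ∑ t, q t * (starRingEnd ℂ) (x t)

/-- `⟨q,x⟩_ℝ = Re⟨q,x⟩`. -/
def rinner (N : ℕ) (q x : Fin N → ℂ) : ℝ := (cinner N q x).re

/-- The dual atomic norm `‖q‖_A^* = sup {⟨q,x⟩_ℝ : ‖x‖_A ≤ 1}`. -/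
def dualAtomicNorm (N : ℕ) (q : Fin N → ℂ) : ℝ :=
  sSup { r : ℝ | ∃ x : Fin N → ℂ, atomicNorm N x ≤ 1 ∧ r = rinner N q x }

/-- `‖e‖₁ = Σ_j |e_j|`. -/
def l1 (n : ℕ) (e : Fin n → ℂ) : ℝ := ∑ j, ‖e j‖

/-- `‖e‖₂² = Σ_j |e_j|²`. -/
def l2sq (n : ℕ) (e : Fin n → ℂ) : ℝ := ∑ j, ‖e j‖ ^ 2

open Complex Finset
open scoped Real ComplexOrder

lemma exists_eq_sum_smul_pow_of_injective {K : Type*} [Field K] {n : ℕ} {μ : Fin n → K}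
    (hμ : Function.Injective μ) (x : Fin n → K) :
    ∃ z : Fin n → K, x = ∑ j, z j • fun t : Fin n => μ j ^ (t : ℕ) := by
  have hV : IsUnit (Matrix.vandermonde μ) := by
    rw [Matrix.isUnit_iff_isUnit_det, isUnit_iff_ne_zero]
    exact Matrix.det_vandermonde_ne_zero_iff.mpr hμ
  obtain ⟨z, rfl⟩ := Matrix.vecMul_surjective_iff_isUnit.mpr hV x
  refine ⟨z, funext fun t => ?_⟩
  simp [Matrix.vecMul, dotProduct, Matrix.vandermonde]

lemma atom_eq_exp_smul (N : ℕ) (f φ : ℝ) : atom N f φ = exp (I * φ) • atom N f 0 := by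
  funext t
  simp only [atom, Pi.smul_apply, smul_eq_mul, ← exp_add]
  push_cast
  ring_nf

lemma atom_add_int_mul_two_pi (N : ℕ) (f φ : ℝ) (n : ℤ) :
    atom N f (φ + n * (2 * π)) = atom N f φ := by
  rw [atom_eq_exp_smul, atom_eq_exp_smul N f φ]
  push_cast
  rw [mul_add, exp_add, show I * (n * (2 * π)) = n * (2 * π * I) by ring,
    exp_int_mul_two_pi_mul_I, mul_one]

lemma exists_mem_Ico_atom_eq (N : ℕ) (f φ : ℝ) :
    ∃ φ' ∈ Set.Ico 0 (2 * π), atom N f φ = atom N f φ' := by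
  refine ⟨toIcoMod Real.two_pi_pos 0 φ, by simpa using toIcoMod_mem_Ico Real.two_pi_pos 0 φ, ?_⟩
  conv_lhs => rw [← toIcoMod_add_toIcoDiv_zsmul Real.two_pi_pos 0 φ, zsmul_eq_mul]
  exact atom_add_int_mul_two_pi N f _ _

lemma smul_atom_zero_eq (N : ℕ) (z : ℂ) (f : ℝ) :
    z • atom N f 0 = (‖z‖ : ℂ) • atom N f z.arg := by
  rw [atom_eq_exp_smul N f z.arg, smul_smul, mul_comm I, norm_mul_exp_arg_mul_I]

lemma atom_rat_eq_pow (N : ℕ) (j : Fin N) :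
    atom N ((j : ℕ) / N) 0 = fun t : Fin N => (exp (2 * π * I / N) ^ (j : ℕ)) ^ (t : ℕ) := by
  funext t
  rw [atom, ← pow_mul, ← exp_nat_mul]
  congr 1
  push_cast
  ring

lemma exists_eq_sum_smul_atom (N : ℕ) (x : Fin N → ℂ) :
    ∃ z : Fin N → ℂ, x = ∑ j, z j • atom N ((j : ℕ) / N) 0 := by
  have hinj : Function.Injective fun j : Fin N => exp (2 * π * I / N) ^ (j : ℕ) := by
    rcases Nat.eq_zero_or_pos N with rfl | hN
    · exact fun j => j.elim0
    exact fun i j h => Fin.ext <| (isPrimitiveRoot_exp N hN.ne').pow_inj i.2 j.2 h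
  simpa only [atom_rat_eq_pow] using exists_eq_sum_smul_pow_of_injective hinj x

def atomicDecompositionCosts (N : ℕ) (x : Fin N → ℂ) : Set ℝ :=
  { r : ℝ | ∃ (K : ℕ) (c : Fin K → ℝ) (f : Fin K → ℝ) (φ : Fin K → ℝ),
    (∀ k, 0 ≤ c k) ∧ (∀ k, f k ∈ Set.Ico (0 : ℝ) 1) ∧
    (∀ k, φ k ∈ Set.Ico (0 : ℝ) (2 * π)) ∧
    (x = ∑ k, fun t => (c k : ℂ) * atom N (f k) (φ k) t) ∧ r = ∑ k, c k }

lemma atomicNorm_eq_sInf (N : ℕ) (x : Fin N → ℂ) :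
    atomicNorm N x = sInf (atomicDecompositionCosts N x) := rfl

lemma atomicDecompositionCosts_nonempty (N : ℕ) (x : Fin N → ℂ) :
    (atomicDecompositionCosts N x).Nonempty := by
  obtain ⟨z, hz⟩ := exists_eq_sum_smul_atom N x
  choose φ hφ hatom using fun j : Fin N => exists_mem_Ico_atom_eq N ((j : ℕ) / N) (z j).arg
  refine ⟨_, N, fun j => ‖z j‖, fun j => (j : ℕ) / N, φ, fun j => norm_nonneg _,
    fun j => ⟨by positivity, (div_lt_one (by exact_mod_cast j.pos)).mpr (by exact_mod_cast j.2)⟩,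
    hφ, ?_, rfl⟩
  rw [hz]
  refine sum_congr rfl fun j _ => ?_
  rw [smul_atom_zero_eq, hatom]
  rfl

lemma norm_apply_le_of_mem_atomicDecompositionCosts {N : ℕ} {x : Fin N → ℂ} {r : ℝ}
    (hr : r ∈ atomicDecompositionCosts N x) (t : Fin N) : ‖x t‖ ≤ r := by
  obtain ⟨K, c, f, φ, hc, -, -, rfl, rfl⟩ := hr
  calc ‖(∑ k, fun t => (c k : ℂ) * atom N (f k) (φ k) t) t‖
      ≤ ∑ k, ‖(c k : ℂ) * atom N (f k) (φ k) t‖ := by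
        rw [Finset.sum_apply]; exact norm_sum_le _ _
    _ = ∑ k, c k := sum_congr rfl fun k _ => by
        simp [atom, Complex.norm_exp, abs_of_nonneg (hc k)]

lemma norm_apply_le_atomicNorm (N : ℕ) (x : Fin N → ℂ) (t : Fin N) :
    ‖x t‖ ≤ atomicNorm N x := by
  rw [atomicNorm_eq_sInf]
  exact le_csInf (atomicDecompositionCosts_nonempty N x) fun _ hr =>
    norm_apply_le_of_mem_atomicDecompositionCosts hr t

lemma atomicNorm_atom_le_one (N : ℕ) {f φ : ℝ} (hf : f ∈ Set.Ico (0 : ℝ) 1)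
    (hφ : φ ∈ Set.Ico (0 : ℝ) (2 * π)) : atomicNorm N (atom N f φ) ≤ 1 := by
  rw [atomicNorm_eq_sInf]
  refine csInf_le ⟨0, fun r hr => ?_⟩ ⟨1, fun _ => 1, fun _ => f, fun _ => φ,
    fun _ => zero_le_one, fun _ => hf, fun _ => hφ, by funext t; simp, by simp⟩
  obtain ⟨K, c, -, -, hc, -, -, -, rfl⟩ := hr
  exact sum_nonneg fun k _ => hc k

lemma bddAbove_rinner_atomicNorm_le_one (N : ℕ) (q : Fin N → ℂ) :
    BddAbove { r : ℝ | ∃ x : Fin N → ℂ, atomicNorm N x ≤ 1 ∧ r = rinner N q x } := by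
  refine ⟨∑ t, ‖q t‖, ?_⟩
  rintro _ ⟨x, hx, rfl⟩
  calc rinner N q x ≤ ‖cinner N q x‖ := re_le_norm _
    _ ≤ ∑ t, ‖q t * (starRingEnd ℂ) (x t)‖ := norm_sum_le _ _
    _ ≤ ∑ t, ‖q t‖ := sum_le_sum fun t _ => by
        rw [norm_mul, Complex.norm_conj]
        exact mul_le_of_le_one_right (norm_nonneg _) ((norm_apply_le_atomicNorm N x t).trans hx)

lemma rinner_atom_le_dualAtomicNorm {N : ℕ} (q : Fin N → ℂ) {f : ℝ}
    (hf : f ∈ Set.Ico (0 : ℝ) 1) (φ : ℝ) : rinner N q (atom N f φ) ≤ dualAtomicNorm N q := by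
  obtain ⟨φ', hφ', hatom⟩ := exists_mem_Ico_atom_eq N f φ
  rw [hatom]
  exact le_csSup (bddAbove_rinner_atomicNorm_le_one N q)
    ⟨_, atomicNorm_atom_le_one N hf hφ', rfl⟩

lemma cinner_atom (N : ℕ) (q : Fin N → ℂ) (f φ : ℝ) :
    cinner N q (atom N f φ) = exp (-(I * φ)) * cinner N q (atom N f 0) := by
  simp only [cinner, atom_eq_exp_smul N f φ, mul_sum, Pi.smul_apply, smul_eq_mul, map_mul,
    ← exp_conj]
  refine sum_congr rfl fun t _ => ?_
  simp only [conj_I, conj_ofReal]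
  ring_nf

lemma rinner_sum_ofReal_mul {N K : ℕ} (q : Fin N → ℂ) (c : Fin K → ℝ) (v : Fin K → Fin N → ℂ) :
    rinner N q (∑ k, fun t => (c k : ℂ) * v k t) = ∑ k, c k * rinner N q (v k) := by
  simp only [rinner, cinner, Finset.sum_apply, map_sum, map_mul, conj_ofReal, mul_sum]
  rw [sum_comm, re_sum]
  refine sum_congr rfl fun k _ => ?_
  rw [← re_ofReal_mul, mul_sum]
  exact congrArg re (sum_congr rfl fun t _ => by ring)

lemma eq_ofReal_mul_exp_of_forall_re_le {p : ℂ} {γ φ : ℝ}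
    (hle : ∀ ψ : ℝ, (exp (-(I * ψ)) * p).re ≤ γ) (heq : (exp (-(I * φ)) * p).re = γ) :
    p = γ * exp (I * φ) := by
  have hrot : exp (-(I * p.arg)) * p = ‖p‖ := by
    calc exp (-(I * p.arg)) * p = exp (-(I * p.arg)) * (‖p‖ * exp (p.arg * I)) := by
          rw [norm_mul_exp_arg_mul_I]
      _ = ‖p‖ := by rw [mul_left_comm, ← exp_add, mul_comm I, neg_add_cancel, exp_zero, mul_one]
  have hnorm : ‖p‖ ≤ γ := by simpa [hrot] using hle p.arg
  set w := exp (-(I * φ)) * p with hw_def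
  have hw : 0 ≤ w := by
    refine re_eq_norm.mp (le_antisymm (re_le_norm w) ?_)
    rw [heq, hw_def, norm_mul, norm_exp]
    simpa using hnorm
  have hwγ : w = γ := Complex.ext (by simp [heq]) (by simp [(nonneg_iff.mp hw).2])
  rw [← hwγ, hw_def, mul_right_comm, ← exp_add, neg_add_cancel, exp_zero, one_mul]

theorem dual_polynomial_peaks_general
    (N : ℕ) (γ : ℝ)
    (q x : Fin N → ℂ) (hq : dualAtomicNorm N q ≤ γ)
    (K : ℕ) (c f φ : Fin K → ℝ)
    (hc : ∀ k, 0 < c k)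
    (hf : ∀ k, f k ∈ Set.Ico (0 : ℝ) 1)
    (hdecomp : x = ∑ k, fun t => (c k : ℂ) * atom N (f k) (φ k) t)
    (hachieve : ∑ k, c k = atomicNorm N x)
    (heq : rinner N q x = γ * atomicNorm N x) :
    ∀ k, cinner N q (atom N (f k) 0) = (γ : ℂ) * Complex.exp (Complex.I * (φ k : ℂ)) := by
  have hle : ∀ k ψ, rinner N q (atom N (f k) ψ) ≤ γ := fun k ψ =>
    (rinner_atom_le_dualAtomicNorm q (hf k) ψ).trans hq
  have hpeak : ∀ k, rinner N q (atom N (f k) (φ k)) = γ := by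
    have hsum : ∑ k, c k * rinner N q (atom N (f k) (φ k)) = ∑ k, c k * γ := by
      rw [← rinner_sum_ofReal_mul, ← hdecomp, heq, ← hachieve, mul_comm, sum_mul]
    intro k
    exact mul_left_cancel₀ (hc k).ne' ((sum_eq_sum_iff_of_le fun k _ =>
      mul_le_mul_of_nonneg_left (hle k (φ k)) (hc k).le).mp hsum k (mem_univ k))
  intro k
  refine eq_ofReal_mul_exp_of_forall_re_le (fun ψ => ?_) ?_
  · rw [← cinner_atom]; exact hle k ψ
  · rw [← cinner_atom]; exact hpeak k

/-- If `‖q‖_A^* ≤ γ`, `x = Σ_k c_k a(f_k,φ_k)` is a decomposition achieving the atomic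
norm, and `⟨q,x⟩_ℝ = γ‖x‖_A`, then `⟨q, a(f_k,0)⟩ = γ e^{iφ_k}` for every `k`. -/
theorem dual_polynomial_peaks
    (N : ℕ) (hN : 0 < N) (γ : ℝ) (hγ : 0 < γ)
    (q x : Fin N → ℂ) (hq : dualAtomicNorm N q ≤ γ)
    (K : ℕ) (c f φ : Fin K → ℝ)
    (hc : ∀ k, 0 < c k)
    (hf : ∀ k, f k ∈ Set.Ico (0 : ℝ) 1)
    (hφ : ∀ k, φ k ∈ Set.Ico (0 : ℝ) (2 * Real.pi))
    (hdecomp : x = ∑ k, fun t => (c k : ℂ) * atom N (f k) (φ k) t)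
    (hachieve : ∑ k, c k = atomicNorm N x)
    (heq : rinner N q x = γ * atomicNorm N x) :
    ∀ k, cinner N q (atom N (f k) 0) = (γ : ℂ) * Complex.exp (Complex.I * (φ k : ℂ)) :=
  dual_polynomial_peaks_general N γ q x hq K c f φ hc hf hdecomp hachieve heq
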